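/- arXiv:1503.00502 — 4 statements merged into one kernel-verified Lean document; each statement's English description precedes it below -/
import Mathlib

section
/- The map k ↦ 8E(k)K(k) − 4(1−k²)K(k)² is a strictly increasing bijection from the interval (0,1) onto the interval (π², ∞); in particular its limit as k → 0⁺ is π² and its limit as k → 1⁻ is +∞. -/
/-!
Write `κₖ(s) = 1 / √((1 - s²)(1 - k²s²))` for the integrand of `K`; on `(0, 1)` the integrand of
`E` is `(1 - k²s²) κₖ(s)`. Hence `F(k) = 8EK - 4(1 - k²)K²` is the integral over the unit square
of `4 (1 + k²(1 - s² - t²)) κₖ(s) κₖ(t)`. After squaring, monotonicity of this integrand in `k²`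
is a polynomial inequality, and on `[0, 1/2]²`, where `1 - s² - t² ≥ 1/2` and `κₖ ≥ 1`, it grows
by at least `2 (k'² - k²)`; so `F` is strictly increasing. At `k = 0` both integrals are
`arcsin 1 = π/2`, and `F` is continuous by dominated convergence with majorant `C / √(1 - s)`.
Finally `F = 4K (2E - (1 - k²)K) ≥ 4K ≥ 2 log ((2 - k)/(1 - k)) → ∞`, and surjectivity onto
`(π², ∞)` follows from the intermediate value theorem.
-/

open MeasureTheory Real Filter Set

noncomputable section

/-- Complete elliptic integral of the first kind. -/
def Kc (k : ℝ) : ℝ := ∫ s in (0:ℝ)..1, 1 / Real.sqrt ((1 - s ^ 2) * (1 - k ^ 2 * s ^ 2))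

/-- Complete elliptic integral of the second kind. -/
def Ec (k : ℝ) : ℝ := ∫ s in (0:ℝ)..1, Real.sqrt ((1 - k ^ 2 * s ^ 2) / (1 - s ^ 2))

open scoped Topology Interval

theorem div_sqrt_le_div_sqrt {x y x' y' : ℝ} (hx' : 0 ≤ x') (hy : 0 < y) (hy' : 0 < y')
    (h : x ^ 2 * y' ≤ x' ^ 2 * y) : x / √y ≤ x' / √y' :=
  calc x / √y ≤ |x| / √y := div_le_div_of_nonneg_right (le_abs_self x) (sqrt_nonneg y)
    _ = √(x ^ 2 / y) := by rw [sqrt_div (sq_nonneg x), sqrt_sq_eq_abs]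
    _ ≤ √(x' ^ 2 / y') := sqrt_le_sqrt (by rwa [div_le_div_iff₀ hy hy'])
    _ = x' / √y' := by rw [sqrt_div (sq_nonneg x'), sqrt_sq hx']

/-- The difference of the two sides is `(v - u) Q`, where the coefficients of `Q` in the basis
`(1 - u)(1 - v), u(1 - v), (1 - u)v, uv` are nonnegative on `[0, 1]²`. -/
theorem sq_one_add_mul_mul_le {a b u v : ℝ} (ha : a ∈ Icc (0 : ℝ) 1) (hb : b ∈ Icc (0 : ℝ) 1)
    (hu : 0 ≤ u) (huv : u ≤ v) (hv : v ≤ 1) :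
    (1 + u * (1 - a - b)) ^ 2 * ((1 - v * a) * (1 - v * b)) ≤
      (1 + v * (1 - a - b)) ^ 2 * ((1 - u * a) * (1 - u * b)) := by
  obtain ⟨ha0, ha1⟩ := ha
  obtain ⟨hb0, hb1⟩ := hb
  have hQ00 : 0 ≤ 2 - a - b := by linarith
  have hQ10 : 0 ≤ 3 - 3 * a - 3 * b + a ^ 2 + a * b + b ^ 2 := by
    nlinarith [mul_nonneg (sub_nonneg.2 ha1) (sub_nonneg.2 hb1)]
  have hQ11 : 0 ≤ ((1 - a) + (1 - b)) * ((1 - a) ^ 2 + (1 - b) ^ 2) := by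
    have : 0 ≤ (1 - a) + (1 - b) := by linarith
    positivity
  have hQ : 0 ≤ 2 - a - b + (u + v) * (3 - 3 * a - 3 * b + a ^ 2 + a * b + b ^ 2 - (2 - a - b))
      + u * v * (((1 - a) + (1 - b)) * ((1 - a) ^ 2 + (1 - b) ^ 2)
        - 2 * (3 - 3 * a - 3 * b + a ^ 2 + a * b + b ^ 2) + (2 - a - b)) := by
    nlinarith [mul_nonneg (mul_nonneg (sub_nonneg.2 (huv.trans hv)) (sub_nonneg.2 hv)) hQ00,
      mul_nonneg (mul_nonneg hu (sub_nonneg.2 hv)) hQ10,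
      mul_nonneg (mul_nonneg (sub_nonneg.2 (huv.trans hv)) (hu.trans huv)) hQ10,
      mul_nonneg (mul_nonneg hu (hu.trans huv)) hQ11]
  nlinarith [mul_nonneg (sub_nonneg.2 huv) hQ]

theorem intervalIntegrable_one_div_sqrt_one_sub :
    IntervalIntegrable (fun s : ℝ => 1 / √(1 - s)) volume 0 1 := by
  have h := (intervalIntegral.intervalIntegrable_rpow' (r := -(1 / 2)) (by norm_num)
    (a := 0) (b := 1)).comp_sub_left 1
  simp only [sub_zero, sub_self] at h
  refine h.symm.congr fun s hs => ?_
  rw [uIoc_of_le zero_le_one] at hs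
  rw [rpow_neg (by linarith [hs.2]), ← sqrt_eq_rpow, one_div]

theorem mul_sub_le_integral {f : ℝ → ℝ} {a m b c : ℝ} (ham : a ≤ m) (hmb : m ≤ b)
    (hf : IntervalIntegrable f volume a b) (hc : ∀ x ∈ Ioo a m, c ≤ f x)
    (h0 : ∀ x ∈ Ioo m b, 0 ≤ f x) : c * (m - a) ≤ ∫ x in a..b, f x := by
  have ham' : IntervalIntegrable f volume a m := hf.mono_set (uIcc_subset_uIcc_left
    (by rw [uIcc_of_le (ham.trans hmb)]; exact ⟨ham, hmb⟩))
  have hmb' : IntervalIntegrable f volume m b := hf.mono_set (uIcc_subset_uIcc_right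
    (by rw [uIcc_of_le (ham.trans hmb)]; exact ⟨ham, hmb⟩))
  rw [← intervalIntegral.integral_add_adjacent_intervals ham' hmb']
  have h₁ := intervalIntegral.integral_mono_on_of_le_Ioo ham intervalIntegrable_const ham' hc
  have h₂ := intervalIntegral.integral_mono_on_of_le_Ioo hmb intervalIntegrable_const hmb' h0
  rw [intervalIntegral.integral_const, smul_eq_mul] at h₁
  rw [intervalIntegral.integral_zero] at h₂
  linarith

theorem StrictMonoOn.bijOn_Ioi_of_tendsto {α β : Type*} [ConditionallyCompleteLinearOrder α]
    [DenselyOrdered α] [TopologicalSpace α] [OrderTopology α] [LinearOrder β] [TopologicalSpace β]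
    [OrderClosedTopology β] {f : α → β} {a b : α} {l : β} (hab : a < b)
    (hmono : StrictMonoOn f (Ioo a b)) (hcont : ContinuousOn f (Ioo a b))
    (hl : Tendsto f (𝓝[>] a) (𝓝 l)) (htop : Tendsto f (𝓝[<] b) atTop) :
    BijOn f (Ioo a b) (Ioi l) := by
  have := nhdsGT_neBot_of_exists_gt ⟨b, hab⟩
  have := nhdsLT_neBot_of_exists_lt ⟨a, hab⟩
  refine ⟨fun k hk => ?_, hmono.injOn, fun y hy => ?_⟩
  · obtain ⟨k', hak', hk'k⟩ := exists_between hk.1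
    have hk' : k' ∈ Ioo a b := ⟨hak', hk'k.trans hk.2⟩
    have hle : l ≤ f k' := le_of_tendsto hl <| by
      filter_upwards [Ioo_mem_nhdsGT hak'] with x hx
      exact (hmono ⟨hx.1, hx.2.trans hk'.2⟩ hk' hx.2).le
    exact hle.trans_lt (hmono hk' hk hk'k)
  · obtain ⟨k₁, hfk₁, hk₁⟩ := ((hl.eventually_lt_const hy).and (Ioo_mem_nhdsGT hab)).exists
    obtain ⟨k₂, hfk₂, hk₂⟩ :=
      ((htop.eventually_ge_atTop y).and (Ioo_mem_nhdsLT hab)).exists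
    have hk₁₂ : k₁ ≤ k₂ := (hmono.lt_iff_lt hk₁ hk₂).1 (hfk₁.trans_le hfk₂) |>.le
    obtain ⟨x, hx, rfl⟩ := intermediate_value_Ioc hk₁₂ (hcont.mono (Icc_subset_Ioo hk₁.1 hk₂.2))
      ⟨hfk₁, hfk₂⟩
    exact ⟨x, ⟨hk₁.1.trans hx.1, hx.2.trans_lt hk₂.2⟩, rfl⟩

namespace EllipticIntegral

def kIntegrand (k s : ℝ) : ℝ := 1 / √((1 - s ^ 2) * (1 - k ^ 2 * s ^ 2))

def eIntegrand (k s : ℝ) : ℝ := √((1 - k ^ 2 * s ^ 2) / (1 - s ^ 2))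

theorem Kc_eq (k : ℝ) : Kc k = ∫ s in (0:ℝ)..1, kIntegrand k s := rfl

theorem Ec_eq (k : ℝ) : Ec k = ∫ s in (0:ℝ)..1, eIntegrand k s := rfl

theorem measurable_kIntegrand (k : ℝ) : Measurable (kIntegrand k) := by
  unfold kIntegrand; fun_prop

theorem measurable_eIntegrand (k : ℝ) : Measurable (eIntegrand k) := by
  unfold eIntegrand; fun_prop

theorem kIntegrand_nonneg (k s : ℝ) : 0 ≤ kIntegrand k s := by
  unfold kIntegrand; positivity

theorem eIntegrand_nonneg (k s : ℝ) : 0 ≤ eIntegrand k s := sqrt_nonneg _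

section Pointwise

variable {k s : ℝ}

theorem one_sub_sq_pos (hs : s ∈ Ioo (0 : ℝ) 1) : 0 < 1 - s ^ 2 := by
  nlinarith [hs.1, hs.2]

theorem one_sub_sq_mul_sq_pos (hk : k ^ 2 ≤ 1) (hs : s ∈ Ioo (0 : ℝ) 1) :
    0 < 1 - k ^ 2 * s ^ 2 := by
  nlinarith [hs.1, hs.2]

theorem eIntegrand_eq (hk : k ^ 2 ≤ 1) (hs : s ∈ Ioo (0 : ℝ) 1) :
    eIntegrand k s = (1 - k ^ 2 * s ^ 2) * kIntegrand k s := by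
  have ha := one_sub_sq_pos hs
  have hb := one_sub_sq_mul_sq_pos hk hs
  rw [eIntegrand, kIntegrand, sqrt_div hb.le, sqrt_mul ha.le]
  field_simp
  rw [sq_sqrt hb.le]

theorem one_le_eIntegrand (hk : k ^ 2 ≤ 1) (hs : s ∈ Ioo (0 : ℝ) 1) : 1 ≤ eIntegrand k s := by
  have ha := one_sub_sq_pos hs
  rw [eIntegrand, one_le_sqrt, one_le_div ha]
  nlinarith

theorem eIntegrand_le_kIntegrand (hk : k ^ 2 ≤ 1) (hs : s ∈ Ioo (0 : ℝ) 1) :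
    eIntegrand k s ≤ kIntegrand k s := by
  rw [eIntegrand_eq hk hs]
  have := kIntegrand_nonneg k s
  have : 0 ≤ k ^ 2 * s ^ 2 := by positivity
  nlinarith

theorem one_le_kIntegrand (hk : k ^ 2 ≤ 1) (hs : s ∈ Ioo (0 : ℝ) 1) : 1 ≤ kIntegrand k s :=
  (one_le_eIntegrand hk hs).trans (eIntegrand_le_kIntegrand hk hs)

theorem kIntegrand_le_kIntegrand {k' : ℝ} (hkk' : k ^ 2 ≤ k' ^ 2) (hk' : k' ^ 2 ≤ 1)
    (hs : s ∈ Ioo (0 : ℝ) 1) : kIntegrand k s ≤ kIntegrand k' s := by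
  have ha := one_sub_sq_pos hs
  have hb := one_sub_sq_mul_sq_pos hk' hs
  unfold kIntegrand
  gcongr

theorem kIntegrand_le {r : ℝ} (hk : k ^ 2 ≤ r) (hr : r < 1) (hs : s ∈ Ioo (0 : ℝ) 1) :
    kIntegrand k s ≤ 1 / √(1 - r) * (1 / √(1 - s)) := by
  have hrs : 0 < (1 - r) * (1 - s) := mul_pos (by linarith) (by linarith [hs.2])
  rw [one_div_mul_one_div, ← sqrt_mul (by linarith), kIntegrand]
  refine one_div_le_one_div_of_le (sqrt_pos.2 hrs) (sqrt_le_sqrt ?_)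
  have h1 : 1 - s ≤ 1 - s ^ 2 := by nlinarith [hs.1, hs.2]
  have h2 : 1 - r ≤ 1 - k ^ 2 * s ^ 2 := by
    nlinarith [hs.1, hs.2, mul_le_mul_of_nonneg_right hk (sq_nonneg s)]
  nlinarith [mul_le_mul h1 h2 (by linarith) (one_sub_sq_pos hs).le]

theorem inv_le_kIntegrand (hk : k ∈ Ioo (0 : ℝ) 1) (hs : s ∈ Ioo (0 : ℝ) 1) :
    (2 * (2 - k - s))⁻¹ ≤ kIntegrand k s := by
  have ha := one_sub_sq_pos hs
  have hb := one_sub_sq_mul_sq_pos (k := k) (by nlinarith [hk.1, hk.2]) hs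
  rw [kIntegrand, one_div]
  gcongr
  rw [sqrt_le_iff]
  refine ⟨by linarith [hk.2, hs.2], ?_⟩
  have h1 : 1 - s ^ 2 ≤ 2 * (2 - k - s) := by nlinarith [hk.2, hs.1, hs.2]
  have h2 : 1 - k ^ 2 * s ^ 2 ≤ 2 * (2 - k - s) := by
    have hks : k * s ≤ 1 := by nlinarith [hk.1, hk.2, hs.1, hs.2]
    nlinarith [mul_pos (sub_pos.2 hk.2) (sub_pos.2 hs.2), mul_pos hk.1 hs.1]
  nlinarith [mul_le_mul h1 h2 hb.le (by linarith [hk.2, hs.2])]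

end Pointwise

theorem ae_mem_Ioo_of_mem_uIoc : ∀ᵐ s : ℝ, s ∈ Ι (0 : ℝ) 1 → s ∈ Ioo (0 : ℝ) 1 := by
  filter_upwards [Measure.ae_ne volume (1 : ℝ)] with s hs1 hs
  rw [uIoc_of_le zero_le_one] at hs
  exact ⟨hs.1, hs.2.lt_of_ne hs1⟩

theorem intervalIntegrable_kIntegrand {k : ℝ} (hk : k ^ 2 < 1) :
    IntervalIntegrable (kIntegrand k) volume 0 1 := by
  refine (intervalIntegrable_one_div_sqrt_one_sub.const_mul (1 / √(1 - k ^ 2))).mono_fun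
    (measurable_kIntegrand k).aestronglyMeasurable ?_
  filter_upwards [ae_restrict_of_ae ae_mem_Ioo_of_mem_uIoc,
    ae_restrict_mem measurableSet_uIoc] with s hs hs'
  rw [norm_of_nonneg (kIntegrand_nonneg k s), norm_of_nonneg (by positivity)]
  exact kIntegrand_le le_rfl hk (hs hs')

theorem intervalIntegrable_eIntegrand {k : ℝ} (hk : k ^ 2 < 1) :
    IntervalIntegrable (eIntegrand k) volume 0 1 := by
  refine (intervalIntegrable_kIntegrand hk).mono_fun
    (measurable_eIntegrand k).aestronglyMeasurable ?_
  filter_upwards [ae_restrict_of_ae ae_mem_Ioo_of_mem_uIoc,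
    ae_restrict_mem measurableSet_uIoc] with s hs hs'
  rw [norm_of_nonneg (eIntegrand_nonneg k s), norm_of_nonneg (kIntegrand_nonneg k s)]
  exact eIntegrand_le_kIntegrand hk.le (hs hs')

theorem continuousAt_integral_of_le_kIntegrand {g : ℝ → ℝ → ℝ} {k₀ : ℝ} (hk₀ : k₀ ^ 2 < 1)
    (hmeas : ∀ k, Measurable (g k))
    (hle : ∀ k, k ^ 2 < 1 → ∀ s ∈ Ioo (0 : ℝ) 1, ‖g k s‖ ≤ kIntegrand k s)
    (hcont : ∀ s ∈ Ioo (0 : ℝ) 1, ContinuousAt (fun k => g k s) k₀) :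
    ContinuousAt (fun k => ∫ s in (0 : ℝ)..1, g k s) k₀ := by
  obtain ⟨r, hk₀r, hr⟩ := exists_between hk₀
  have hnear : ∀ᶠ k in 𝓝 k₀, k ^ 2 < r :=
    (continuous_pow 2).continuousAt.eventually_lt continuousAt_const hk₀r
  refine intervalIntegral.continuousAt_of_dominated_interval
    (bound := fun s => 1 / √(1 - r) * (1 / √(1 - s)))
    (Eventually.of_forall fun k => (hmeas k).aestronglyMeasurable) ?_
    (intervalIntegrable_one_div_sqrt_one_sub.const_mul _) ?_
  · filter_upwards [hnear] with k hk
    filter_upwards [ae_mem_Ioo_of_mem_uIoc] with s hs hs'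
    exact (hle k (hk.trans hr) s (hs hs')).trans (kIntegrand_le hk.le hr (hs hs'))
  · filter_upwards [ae_mem_Ioo_of_mem_uIoc] with s hs hs'
    exact hcont s (hs hs')

theorem continuousAt_Kc {k : ℝ} (hk : k ^ 2 < 1) : ContinuousAt Kc k := by
  refine continuousAt_integral_of_le_kIntegrand hk measurable_kIntegrand
    (fun k _ s _ => (norm_of_nonneg (kIntegrand_nonneg k s)).le) fun s hs => ?_
  have hpos := mul_pos (one_sub_sq_pos hs) (one_sub_sq_mul_sq_pos hk.le hs)
  fun_prop (disch := exact (sqrt_pos.2 hpos).ne')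

theorem continuousAt_Ec {k : ℝ} (hk : k ^ 2 < 1) : ContinuousAt Ec k := by
  refine continuousAt_integral_of_le_kIntegrand hk measurable_eIntegrand
    (fun k hk s hs => (norm_of_nonneg (eIntegrand_nonneg k s)).trans_le
      (eIntegrand_le_kIntegrand hk.le hs)) fun s _ => ?_
  fun_prop

theorem Kc_zero : Kc 0 = π / 2 := by
  have h := intervalIntegral.integral_eq_sub_of_hasDeriv_right_of_le zero_le_one
    continuous_arcsin.continuousOn (fun x hx => ?_)
    (intervalIntegrable_kIntegrand (k := 0) (by norm_num))
  · rwa [arcsin_one, arcsin_zero, sub_zero, ← Kc_eq] at h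
  · convert (hasDerivAt_arcsin (by linarith [hx.1]) (by linarith [hx.2])).hasDerivWithinAt using 1
    simp [kIntegrand]

theorem Ec_zero : Ec 0 = π / 2 := by
  rw [← Kc_zero, Ec, Kc]
  congr 1 with s
  simp [sqrt_inv]

theorem one_le_two_mul_Ec_sub {k : ℝ} (hk : k ^ 2 < 1) : 1 ≤ 2 * Ec k - (1 - k ^ 2) * Kc k := by
  have hint := ((intervalIntegrable_eIntegrand hk).const_mul 2).sub
    ((intervalIntegrable_kIntegrand hk).const_mul (1 - k ^ 2))
  have h := intervalIntegral.integral_mono_on_of_le_Ioo zero_le_one intervalIntegrable_const hint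
    fun s hs => show 1 ≤ 2 * eIntegrand k s - (1 - k ^ 2) * kIntegrand k s by
      have h₁ := one_le_eIntegrand hk.le hs
      have h₂ := eIntegrand_eq hk.le hs
      have h₃ := kIntegrand_nonneg k s
      nlinarith [mul_nonneg (mul_nonneg (sq_nonneg k) (one_sub_sq_pos hs).le) h₃]
  rwa [intervalIntegral.integral_sub ((intervalIntegrable_eIntegrand hk).const_mul 2)
    ((intervalIntegrable_kIntegrand hk).const_mul _), intervalIntegral.integral_const_mul,
    intervalIntegral.integral_const_mul, ← Kc_eq, ← Ec_eq, intervalIntegral.integral_const,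
    sub_zero, one_smul] at h

theorem log_le_Kc {k : ℝ} (hk : k ∈ Ioo (0 : ℝ) 1) : log ((2 - k) / (1 - k)) / 2 ≤ Kc k := by
  have h2k : ∀ s ∈ [[(0 : ℝ), 1]], 2 - k - s ≠ 0 := fun s hs => by
    rw [uIcc_of_le zero_le_one] at hs
    linarith [hk.2, hs.2]
  have hint : IntervalIntegrable (fun s => (2 * (2 - k - s))⁻¹) volume 0 1 :=
    (ContinuousOn.inv₀ (by fun_prop) fun s hs =>
      mul_ne_zero two_ne_zero (h2k s hs)).intervalIntegrable
  have hval : ∫ s in (0 : ℝ)..1, (2 * (2 - k - s))⁻¹ = log ((2 - k) / (1 - k)) / 2 := by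
    simp_rw [mul_inv, intervalIntegral.integral_const_mul]
    rw [intervalIntegral.integral_comp_sub_left (fun x => x⁻¹), integral_inv]
    · ring_nf
    · rw [uIcc_of_le (by linarith)]
      exact fun h => by linarith [hk.2, h.1]
  rw [← hval, Kc_eq]
  exact intervalIntegral.integral_mono_on_of_le_Ioo zero_le_one hint
    (intervalIntegrable_kIntegrand (by nlinarith [hk.1, hk.2])) fun s hs => inv_le_kIntegrand hk hs

def F (k : ℝ) : ℝ := 8 * Ec k * Kc k - 4 * (1 - k ^ 2) * Kc k ^ 2

/-- Its iterated integral is `F k` by linearity alone; `kernel_eq` gives the closed form. -/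
def kernel (k s t : ℝ) : ℝ :=
  (4 * eIntegrand k s - 4 * (1 - k ^ 2) * kIntegrand k s) * kIntegrand k t +
    4 * kIntegrand k s * eIntegrand k t

section Kernel

variable {k : ℝ}

theorem intervalIntegrable_kernel (hk : k ^ 2 < 1) (s : ℝ) :
    IntervalIntegrable (kernel k s) volume 0 1 :=
  ((intervalIntegrable_kIntegrand hk).const_mul _).add
    ((intervalIntegrable_eIntegrand hk).const_mul _)

theorem integral_kernel (hk : k ^ 2 < 1) (s : ℝ) :
    ∫ t in (0 : ℝ)..1, kernel k s t =
      (4 * eIntegrand k s - 4 * (1 - k ^ 2) * kIntegrand k s) * Kc k +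
        4 * kIntegrand k s * Ec k := by
  unfold kernel
  rw [intervalIntegral.integral_add ((intervalIntegrable_kIntegrand hk).const_mul _)
    ((intervalIntegrable_eIntegrand hk).const_mul _), intervalIntegral.integral_const_mul,
    intervalIntegral.integral_const_mul, ← Kc_eq, ← Ec_eq]

theorem intervalIntegrable_integral_kernel (hk : k ^ 2 < 1) :
    IntervalIntegrable (fun s => ∫ t in (0 : ℝ)..1, kernel k s t) volume 0 1 := by
  simp_rw [integral_kernel hk]
  exact ((((intervalIntegrable_eIntegrand hk).const_mul 4).sub
    ((intervalIntegrable_kIntegrand hk).const_mul _)).mul_const _).add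
    (((intervalIntegrable_kIntegrand hk).const_mul 4).mul_const _)

theorem integral_integral_kernel (hk : k ^ 2 < 1) :
    ∫ s in (0 : ℝ)..1, ∫ t in (0 : ℝ)..1, kernel k s t = F k := by
  have hE := intervalIntegrable_eIntegrand hk
  have hK := intervalIntegrable_kIntegrand hk
  simp_rw [integral_kernel hk]
  rw [intervalIntegral.integral_add (((hE.const_mul 4).sub (hK.const_mul _)).mul_const _)
      ((hK.const_mul 4).mul_const _), intervalIntegral.integral_mul_const,
    intervalIntegral.integral_mul_const, intervalIntegral.integral_sub (hE.const_mul 4)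
      (hK.const_mul _), intervalIntegral.integral_const_mul, intervalIntegral.integral_const_mul,
    intervalIntegral.integral_const_mul, ← Kc_eq, ← Ec_eq, F]
  ring

variable {s t : ℝ}

theorem kernel_eq (hk : k ^ 2 ≤ 1) (hs : s ∈ Ioo (0 : ℝ) 1) (ht : t ∈ Ioo (0 : ℝ) 1) :
    kernel k s t = 4 * (1 + k ^ 2 * (1 - s ^ 2 - t ^ 2)) * (kIntegrand k s * kIntegrand k t) := by
  rw [kernel, eIntegrand_eq hk hs, eIntegrand_eq hk ht]
  ring

theorem kernel_le_kernel {k' : ℝ} (hkk' : k ^ 2 ≤ k' ^ 2) (hk' : k' ^ 2 ≤ 1)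
    (hs : s ∈ Ioo (0 : ℝ) 1) (ht : t ∈ Ioo (0 : ℝ) 1) : kernel k s t ≤ kernel k' s t := by
  have hk := hkk'.trans hk'
  have hss := one_sub_sq_pos hs
  have htt := one_sub_sq_pos ht
  rw [kernel_eq hk hs ht, kernel_eq hk' hs ht, kIntegrand, kIntegrand, kIntegrand, kIntegrand,
    one_div_mul_one_div, ← sqrt_mul (mul_pos hss (one_sub_sq_mul_sq_pos hk hs)).le,
    one_div_mul_one_div, ← sqrt_mul (mul_pos hss (one_sub_sq_mul_sq_pos hk' hs)).le,
    mul_one_div, mul_one_div]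
  refine div_sqrt_le_div_sqrt (by nlinarith [hs.1, hs.2, ht.1, ht.2, sq_nonneg k'])
    (mul_pos (mul_pos hss (one_sub_sq_mul_sq_pos hk hs))
      (mul_pos htt (one_sub_sq_mul_sq_pos hk ht)))
    (mul_pos (mul_pos hss (one_sub_sq_mul_sq_pos hk' hs))
      (mul_pos htt (one_sub_sq_mul_sq_pos hk' ht))) ?_
  have key := sq_one_add_mul_mul_le ⟨sq_nonneg s, by nlinarith⟩ ⟨sq_nonneg t, by nlinarith⟩
    (sq_nonneg k) hkk' hk'
  nlinarith [mul_le_mul_of_nonneg_left key (mul_pos hss htt).le]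

theorem sub_le_kernel_sub_kernel {k' : ℝ} (hkk' : k ^ 2 ≤ k' ^ 2) (hk' : k' ^ 2 ≤ 1)
    (hs : s ∈ Ioo (0 : ℝ) (1 / 2)) (ht : t ∈ Ioo (0 : ℝ) (1 / 2)) :
    2 * (k' ^ 2 - k ^ 2) ≤ kernel k' s t - kernel k s t := by
  have hk := hkk'.trans hk'
  have hs' : s ∈ Ioo (0 : ℝ) 1 := ⟨hs.1, by linarith [hs.2]⟩
  have ht' : t ∈ Ioo (0 : ℝ) 1 := ⟨ht.1, by linarith [ht.2]⟩
  have hks := kIntegrand_le_kIntegrand hkk' hk' hs'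
  have hkt := kIntegrand_le_kIntegrand hkk' hk' ht'
  have h1s := one_le_kIntegrand hk hs'
  have h1t := one_le_kIntegrand hk ht'
  have hprod : kIntegrand k s * kIntegrand k t ≤ kIntegrand k' s * kIntegrand k' t :=
    mul_le_mul hks hkt (by linarith) (kIntegrand_nonneg k' s)
  have hone : 1 ≤ kIntegrand k s * kIntegrand k t := one_le_mul_of_one_le_of_one_le h1s h1t
  have hc : 1 / 2 ≤ 1 - s ^ 2 - t ^ 2 := by nlinarith [hs.1, hs.2, ht.1, ht.2]
  rw [kernel_eq hk hs' ht', kernel_eq hk' hs' ht']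
  have hc' : 0 ≤ 1 + k' ^ 2 * (1 - s ^ 2 - t ^ 2) := by positivity
  nlinarith [mul_le_mul_of_nonneg_left hprod hc',
    mul_le_mul hc hone (by norm_num) (by linarith), sub_nonneg.2 hkk']

end Kernel

theorem F_lt_F_of_sq_lt_sq {k k' : ℝ} (hkk' : k ^ 2 < k' ^ 2) (hk' : k' ^ 2 < 1) : F k < F k' := by
  have hk := hkk'.trans hk'
  let D s := ∫ t in (0 : ℝ)..1, kernel k' s t - kernel k s t
  have hD_eq :
      D = fun s => (∫ t in (0 : ℝ)..1, kernel k' s t) - ∫ t in (0 : ℝ)..1, kernel k s t :=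
    funext fun s => intervalIntegral.integral_sub (intervalIntegrable_kernel hk' s)
      (intervalIntegrable_kernel hk s)
  have hDint : IntervalIntegrable D volume 0 1 := hD_eq ▸
    (intervalIntegrable_integral_kernel hk').sub (intervalIntegrable_integral_kernel hk)
  have hD : ∫ s in (0 : ℝ)..1, D s = F k' - F k := by
    rw [hD_eq, intervalIntegral.integral_sub (intervalIntegrable_integral_kernel hk')
      (intervalIntegrable_integral_kernel hk), integral_integral_kernel hk',
      integral_integral_kernel hk]
  have hD_nonneg : ∀ s ∈ Ioo (1 / 2 : ℝ) 1, 0 ≤ D s := fun s hs => by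
    simpa using intervalIntegral.integral_mono_on_of_le_Ioo zero_le_one intervalIntegrable_const
      ((intervalIntegrable_kernel hk' s).sub (intervalIntegrable_kernel hk s)) fun t ht =>
        sub_nonneg.2 (kernel_le_kernel hkk'.le hk'.le ⟨by linarith [hs.1], hs.2⟩ ht)
  have hD_ge : ∀ s ∈ Ioo (0 : ℝ) (1 / 2), k' ^ 2 - k ^ 2 ≤ D s := fun s hs => by
    have := mul_sub_le_integral (by norm_num) (by norm_num) ((intervalIntegrable_kernel hk' s).sub
      (intervalIntegrable_kernel hk s)) (fun t ht => sub_le_kernel_sub_kernel hkk'.le hk'.le hs ht)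
      fun t ht => sub_nonneg.2 (kernel_le_kernel hkk'.le hk'.le ⟨hs.1, by linarith [hs.2]⟩
        ⟨by linarith [ht.1], ht.2⟩)
    linarith
  have := mul_sub_le_integral (by norm_num) (by norm_num) hDint hD_ge hD_nonneg
  linarith

theorem strictMonoOn_F : StrictMonoOn F (Ico 0 1) := fun k hk k' hk' hkk' =>
  F_lt_F_of_sq_lt_sq (pow_lt_pow_left₀ hkk' hk.1 two_ne_zero) (by nlinarith [hk'.1, hk'.2])

theorem continuousAt_F {k : ℝ} (hk : k ^ 2 < 1) : ContinuousAt F k := by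
  have := continuousAt_Kc hk
  have := continuousAt_Ec hk
  unfold F
  fun_prop

theorem F_zero : F 0 = π ^ 2 := by
  rw [F, Kc_zero, Ec_zero]
  ring

theorem tendsto_F_nhdsGT_zero : Tendsto F (𝓝[>] 0) (𝓝 (π ^ 2)) :=
  F_zero ▸ (continuousAt_F (by norm_num)).tendsto.mono_left nhdsWithin_le_nhds

theorem four_mul_Kc_le_F {k : ℝ} (hk : k ^ 2 < 1) : 4 * Kc k ≤ F k := by
  have hK : 0 ≤ Kc k :=
    intervalIntegral.integral_nonneg zero_le_one fun s _ => kIntegrand_nonneg k s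
  have := one_le_two_mul_Ec_sub hk
  rw [F]
  nlinarith

theorem tendsto_F_nhdsLT_one : Tendsto F (𝓝[<] 1) atTop := by
  have h₁ : Tendsto (fun k : ℝ => 1 - k) (𝓝[<] 1) (𝓝[>] 0) :=
    tendsto_nhdsWithin_of_tendsto_nhds_of_eventually_within _
      (((continuous_sub_left 1).tendsto' 1 0 (sub_self 1)).mono_left nhdsWithin_le_nhds)
      (eventually_mem_nhdsWithin.mono fun _ hk => sub_pos.2 (mem_Iio.1 hk))
  have h₂ : Tendsto (fun k : ℝ => 2 - k) (𝓝[<] 1) (𝓝 1) :=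
    ((continuous_sub_left 2).tendsto' 1 1 (by norm_num)).mono_left nhdsWithin_le_nhds
  have hlog : Tendsto (fun k : ℝ => 2 * log ((2 - k) / (1 - k))) (𝓝[<] 1) atTop :=
    (tendsto_log_atTop.comp (h₂.pos_mul_atTop one_pos
      (tendsto_inv_nhdsGT_zero.comp h₁))).const_mul_atTop two_pos
  refine tendsto_atTop_mono' _ ?_ hlog
  filter_upwards [Ioo_mem_nhdsLT (zero_lt_one' ℝ)] with k hk
  have := four_mul_Kc_le_F (by nlinarith [hk.1, hk.2] : k ^ 2 < 1)
  have := log_le_Kc hk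
  linarith

end EllipticIntegral

open EllipticIntegral

theorem elliptic_bijection :
    StrictMonoOn (fun k : ℝ => 8 * Ec k * Kc k - 4 * (1 - k ^ 2) * Kc k ^ 2)
      (Set.Ioo 0 1) ∧
    Set.BijOn (fun k : ℝ => 8 * Ec k * Kc k - 4 * (1 - k ^ 2) * Kc k ^ 2)
      (Set.Ioo 0 1) (Set.Ioi (π ^ 2)) ∧
    Tendsto (fun k : ℝ => 8 * Ec k * Kc k - 4 * (1 - k ^ 2) * Kc k ^ 2)
      (nhdsWithin 0 (Set.Ioi 0)) (nhds (π ^ 2)) ∧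
    Tendsto (fun k : ℝ => 8 * Ec k * Kc k - 4 * (1 - k ^ 2) * Kc k ^ 2)
      (nhdsWithin 1 (Set.Iio 1)) atTop := by
  have hmono : StrictMonoOn F (Ioo 0 1) := strictMonoOn_F.mono Ioo_subset_Ico_self
  have hcont : ContinuousOn F (Ioo 0 1) := fun k hk =>
    (continuousAt_F (by nlinarith [hk.1, hk.2])).continuousWithinAt
  exact ⟨hmono, hmono.bijOn_Ioi_of_tendsto zero_lt_one hcont tendsto_F_nhdsGT_zero
    tendsto_F_nhdsLT_one, tendsto_F_nhdsGT_zero, tendsto_F_nhdsLT_one⟩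
end
end

section
/- Let M > 0 and let κ_M be the measure on [0, M] with density u ↦ 1/√u with respect to Lebesgue measure. Then for every x ∈ [0, M), the logarithmic potential of κ_M satisfies U^{κ_M}(x) = ∫₀^M −log|x−u| (1/√u) du = 2√x · log((√M − √x)/(√M + √x)) − 2√M · log(M − x) + 4√M. -/
/-!
Substituting `u = t²` turns the density `du / √u` into `2 dt` on `[0, √M]`. With `x = s²` the
integrand becomes `-2 log |t² - s²| = -2 (log |t - s| + log (t + s))` away from `t = ±s`, and both
terms are shifted logarithms, integrated with `∫ log = y log y - y`. Since
`M - x = (√M - √x)(√M + √x)`, the result regroups into the stated closed form.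
-/

open MeasureTheory Real Filter Set

noncomputable section

theorem intervalIntegral.integral_div_sqrt_eq (f : ℝ → ℝ) {M : ℝ} (hM : 0 ≤ M) :
    ∫ u in (0:ℝ)..M, f u / √u = 2 * ∫ t in (0:ℝ)..√M, f (t ^ 2) := by
  have hsubst := intervalIntegral.integral_comp_mul_deriv_of_deriv_nonneg
    (f := fun t : ℝ => t ^ 2) (f' := fun t => 2 * t) (g := fun u => f u / √u)
    (a := 0) (b := √M) (continuous_pow 2).continuousOn
    (fun t _ => by simpa using hasDerivAt_pow 2 t)
    (fun t ht => by rw [min_eq_left (sqrt_nonneg M)] at ht; linarith [ht.1])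
  simp only [Function.comp_def, sq_sqrt hM, zero_pow two_ne_zero] at hsubst
  rw [← hsubst, ← intervalIntegral.integral_const_mul]
  refine intervalIntegral.integral_congr_ae (Eventually.of_forall fun t ht => ?_)
  rw [uIoc_of_le (sqrt_nonneg M)] at ht
  rw [sqrt_sq ht.1.le]
  field_simp [ht.1.ne']

theorem integral_log_abs_sq_sub_sq (s b : ℝ) :
    ∫ t in (0:ℝ)..b, log |t ^ 2 - s ^ 2| =
      (b - s) * log (b - s) + (b + s) * log (b + s) - 2 * b := by
  have hsplit : ∀ᵐ t, t ∈ uIoc 0 b → log |t ^ 2 - s ^ 2| = log (t - s) + log (t + s) := by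
    have hfin : ({s, -s} : Set ℝ).Countable := (toFinite _).countable
    filter_upwards [hfin.ae_notMem volume] with t ht _
    simp only [mem_insert_iff, mem_singleton_iff, not_or] at ht
    have hsub : t - s ≠ 0 := sub_ne_zero.2 ht.1
    have hadd : t + s ≠ 0 := fun h => ht.2 (by linarith)
    rw [show t ^ 2 - s ^ 2 = (t - s) * (t + s) by ring, abs_mul,
      log_mul (abs_ne_zero.2 hsub) (abs_ne_zero.2 hadd), log_abs, log_abs]
  have hsub : IntervalIntegrable (fun t => log (t - s)) volume 0 b := by
    simpa using (intervalIntegral.intervalIntegrable_log' (a := -s) (b := b - s)).comp_sub_right s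
  have hadd : IntervalIntegrable (fun t => log (t + s)) volume 0 b := by
    simpa using (intervalIntegral.intervalIntegrable_log' (a := s) (b := b + s)).comp_add_right s
  rw [intervalIntegral.integral_congr_ae hsplit, intervalIntegral.integral_add hsub hadd,
    intervalIntegral.integral_comp_sub_right log, intervalIntegral.integral_comp_add_right log,
    integral_log, integral_log, zero_sub, zero_add, log_neg_eq_log]
  ring

theorem potential_of_kappa (M : ℝ) (hM : 0 < M) (x : ℝ) (hx : x ∈ Set.Ico 0 M) :
    (∫ u in (0:ℝ)..M, -Real.log |x - u| / Real.sqrt u)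
      = 2 * Real.sqrt x * Real.log ((Real.sqrt M - Real.sqrt x) / (Real.sqrt M + Real.sqrt x))
        - 2 * Real.sqrt M * Real.log (M - x) + 4 * Real.sqrt M := by
  obtain ⟨hx0, hxM⟩ := hx
  have hsub : 0 < √M - √x := sub_pos.2 (sqrt_lt_sqrt hx0 hxM)
  have hadd : 0 < √M + √x := by positivity
  have hfactor : M - x = (√M - √x) * (√M + √x) := by
    linear_combination sq_sqrt hx0 - sq_sqrt hM.le
  calc (∫ u in (0:ℝ)..M, -log |x - u| / √u)
      = 2 * ∫ t in (0:ℝ)..√M, -log |t ^ 2 - √x ^ 2| := by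
        rw [intervalIntegral.integral_div_sqrt_eq _ hM.le, sq_sqrt hx0]
        simp_rw [abs_sub_comm x]
    _ = -2 * ((√M - √x) * log (√M - √x) + (√M + √x) * log (√M + √x) - 2 * √M) := by
        rw [intervalIntegral.integral_neg, integral_log_abs_sq_sub_sq]
        ring
    _ = _ := by
        rw [hfactor, log_mul hsub.ne' hadd.ne', log_div hsub.ne' hadd.ne']
        ring
end
end

section
/- Let M > 0 and let κ_M be the measure on [0, M] with density u ↦ 1/√u with respect to Lebesgue measure. Then the logarithmic potential U^{κ_M}(x) = ∫₀^M −log|x−u| (1/√u) du is a concave function of x on the open interval (0, M); equivalently, its second derivative satisfies (U^{κ_M})''(x) < 0 for all x ∈ (0, M), and moreover x^{3/2}(U^{κ_M})''(x) tends to 0 as x → 0⁺ and d/dx (x^{3/2}(U^{κ_M})''(x)) = −√(Mx)/(M−x)² on (0, M). -/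
/-!
Write `a = √M` and `s = √x`. After the substitution `u = t ^ 2` the kernel `-log |x - u| / √u`
has the explicit primitive `u ↦ -2 F(√x, √u)`, where `F = logSqSubPrimitive`,
`F(s, t) = (t - s) log (t - s) + (t + s) log (t + s) - 2 t`, satisfies `∂ₜ F = log (t² - s²)`.
As `F(s, 0) = 0`, this gives the closed form `U(x) = -2 F(√x, √M)`. Differentiating in `s`,
`U'(x) = -L(s) / s` with `L = logRatio a`, and `x ^ (3/2) U''(x) = g(s)` with
`g = secondDerivNumerator a = L / 2 - a s / (a² - s²)`. Finally `g(0) = 0` and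
`g'(s) = -2 a s² / (a² - s²)² < 0`, so `g < 0` on `(0, a)`.
-/

open MeasureTheory Real Filter Set

noncomputable section

/-- The logarithmic potential of the measure `𝟙_{[0,M]}(u) u^{-1/2} du`. -/
def UkM (M : ℝ) : ℝ → ℝ := fun x => ∫ u in (0:ℝ)..M, -Real.log |x - u| / Real.sqrt u

open intervalIntegral

lemma intervalIntegrable_inv_sqrt {c : ℝ} (hc : 0 ≤ c) :
    IntervalIntegrable (fun u => (√u)⁻¹) volume 0 c := by
  refine (intervalIntegrable_rpow' (r := -(1 / 2)) (by norm_num)).congr ?_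
  rw [uIoc_of_le hc]
  intro u hu
  simp only [rpow_neg hu.1.le, sqrt_eq_rpow]

lemma intervalIntegrable_log_sub (x a b : ℝ) :
    IntervalIntegrable (fun u => log (x - u)) volume a b := by
  simpa using (intervalIntegrable_log' (a := x - a) (b := x - b)).comp_sub_left x

lemma intervalIntegrable_log_abs_sub_div_sqrt {x b : ℝ} (hx : 0 < x) (hb : 0 < b) :
    IntervalIntegrable (fun u => -log |x - u| / √u) volume 0 b := by
  simp only [log_abs, div_eq_mul_inv]
  refine IntervalIntegrable.trans (b := x / 2) ?_ ?_
  · refine (intervalIntegrable_inv_sqrt (by positivity)).continuousOn_mul ?_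
    refine ((continuousOn_const.sub continuousOn_id).log fun u hu => ?_).neg
    rw [uIcc_of_le (by positivity)] at hu
    exact sub_ne_zero.mpr (by linarith [hu.2] : u < x).ne'
  · refine (intervalIntegrable_log_sub x _ b).neg.mul_continuousOn fun u hu => ?_
    have hu0 : 0 < u := by rcases mem_uIcc.mp hu with h | h <;> linarith [h.1]
    exact (continuous_sqrt.continuousAt.inv₀ (sqrt_pos.mpr hu0).ne').continuousWithinAt

-- As `Real.log` is even, this is a primitive of `t ↦ log |t ^ 2 - s ^ 2|` on all of `t ≠ ±s`.
def logSqSubPrimitive (s t : ℝ) : ℝ := (t - s) * log (t - s) + (t + s) * log (t + s) - 2 * t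

lemma continuous_logSqSubPrimitive (s : ℝ) : Continuous (logSqSubPrimitive s) := by
  unfold logSqSubPrimitive
  have h₁ := continuous_mul_log.comp (continuous_id.sub (continuous_const (y := s)))
  have h₂ := continuous_mul_log.comp (continuous_id.add (continuous_const (y := s)))
  exact (h₁.add h₂).sub (continuous_const.mul continuous_id)

lemma logSqSubPrimitive_zero_right (s : ℝ) : logSqSubPrimitive s 0 = 0 := by
  simp [logSqSubPrimitive, log_neg_eq_log]

lemma hasDerivAt_logSqSubPrimitive_right {s t : ℝ} (h₁ : t - s ≠ 0) (h₂ : t + s ≠ 0) :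
    HasDerivAt (logSqSubPrimitive s) (log (t ^ 2 - s ^ 2)) t := by
  have hsub := (hasDerivAt_mul_log h₁).comp t ((hasDerivAt_id t).sub_const s)
  have hadd := (hasDerivAt_mul_log h₂).comp t ((hasDerivAt_id t).add_const s)
  refine ((hsub.add hadd).sub ((hasDerivAt_id t).const_mul 2)).congr_deriv ?_
  rw [show t ^ 2 - s ^ 2 = (t - s) * (t + s) by ring, log_mul h₁ h₂]
  simp only [mul_one]
  ring

def logRatio (a s : ℝ) : ℝ := log (a + s) - log (a - s)

lemma hasDerivAt_logSqSubPrimitive_left {s t : ℝ} (h₁ : t - s ≠ 0) (h₂ : t + s ≠ 0) :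
    HasDerivAt (fun s => logSqSubPrimitive s t) (logRatio t s) s := by
  have hsub := (hasDerivAt_mul_log h₁).comp s ((hasDerivAt_id s).const_sub t)
  have hadd := (hasDerivAt_mul_log h₂).comp s ((hasDerivAt_id s).const_add t)
  refine ((hsub.add hadd).sub_const (2 * t)).congr_deriv ?_
  rw [logRatio]
  ring

lemma integral_neg_log_abs_sub_div_sqrt {x b : ℝ} (hx : 0 < x) (hb : 0 < b) :
    ∫ u in 0..b, -log |x - u| / √u = -2 * logSqSubPrimitive √x √b := by
  rw [integral_eq_of_hasDerivAt_off_countable_of_le (fun u => -2 * logSqSubPrimitive √x √u) _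
    hb.le (countable_singleton x) _ _ (intervalIntegrable_log_abs_sub_div_sqrt hx hb)]
  · rw [sqrt_zero, logSqSubPrimitive_zero_right]
    ring
  · exact (continuous_const.mul
      ((continuous_logSqSubPrimitive _).comp continuous_sqrt)).continuousOn
  · rintro u ⟨⟨hu, -⟩, hux⟩
    have hsqrt : √u ≠ √x := fun h => hux ((sqrt_inj hu.le hx.le).mp h)
    have hderiv := ((hasDerivAt_logSqSubPrimitive_right (sub_ne_zero.mpr hsqrt)
      (by positivity)).comp u (hasDerivAt_sqrt hu.ne')).const_mul (-2)
    refine hderiv.congr_deriv ?_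
    rw [sq_sqrt hu.le, sq_sqrt hx.le, ← log_abs, abs_sub_comm, log_abs]
    field_simp

def secondDerivNumerator (a s : ℝ) : ℝ := logRatio a s / 2 - a * s / (a ^ 2 - s ^ 2)

lemma secondDerivNumerator_zero (a : ℝ) : secondDerivNumerator a 0 = 0 := by
  simp [secondDerivNumerator, logRatio]

section
variable {a s : ℝ}

lemma sq_sub_sq_ne_zero (h₁ : a + s ≠ 0) (h₂ : a - s ≠ 0) : a ^ 2 - s ^ 2 ≠ 0 := by
  rw [sq_sub_sq]
  exact mul_ne_zero h₁ h₂

lemma hasDerivAt_logRatio (h₁ : a + s ≠ 0) (h₂ : a - s ≠ 0) :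
    HasDerivAt (logRatio a) (2 * a / (a ^ 2 - s ^ 2)) s := by
  have hadd := (hasDerivAt_log h₁).comp s ((hasDerivAt_id s).const_add a)
  have hsub := (hasDerivAt_log h₂).comp s ((hasDerivAt_id s).const_sub a)
  refine (hadd.sub hsub).congr_deriv ?_
  have := sq_sub_sq_ne_zero h₁ h₂
  field_simp
  ring

lemma hasDerivAt_logRatio_div_self (h₁ : a + s ≠ 0) (h₂ : a - s ≠ 0) (hs : s ≠ 0) :
    HasDerivAt (fun s => logRatio a s / s) (-2 * secondDerivNumerator a s / s ^ 2) s := by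
  refine ((hasDerivAt_logRatio h₁ h₂).div (hasDerivAt_id' s) hs).congr_deriv ?_
  have := sq_sub_sq_ne_zero h₁ h₂
  rw [secondDerivNumerator]
  field_simp
  ring

lemma hasDerivAt_secondDerivNumerator (h₁ : a + s ≠ 0) (h₂ : a - s ≠ 0) :
    HasDerivAt (secondDerivNumerator a) (-2 * a * s ^ 2 / (a ^ 2 - s ^ 2) ^ 2) s := by
  have := sq_sub_sq_ne_zero h₁ h₂
  have hquot := ((hasDerivAt_id' s).const_mul a).div
    ((hasDerivAt_pow 2 s).const_sub (a ^ 2)) this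
  refine (((hasDerivAt_logRatio h₁ h₂).div_const 2).sub hquot).congr_deriv ?_
  field_simp
  ring

lemma secondDerivNumerator_neg (hs : 0 < s) (hsa : s < a) : secondDerivNumerator a s < 0 := by
  have hderiv : ∀ z ∈ Icc 0 s, HasDerivAt (secondDerivNumerator a)
      (-2 * a * z ^ 2 / (a ^ 2 - z ^ 2) ^ 2) z := fun z hz =>
    hasDerivAt_secondDerivNumerator (by linarith [hz.1]) (by linarith [hz.2])
  have hanti : StrictAntiOn (secondDerivNumerator a) (Icc 0 s) := by
    refine strictAntiOn_of_deriv_neg (convex_Icc 0 s)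
      (fun z hz => (hderiv z hz).continuousAt.continuousWithinAt) fun z hz => ?_
    rw [interior_Icc] at hz
    rw [(hderiv z (Ioo_subset_Icc_self hz)).deriv]
    have : 0 < a ^ 2 - z ^ 2 := by nlinarith [hz.1, hz.2]
    have : 0 < a := by linarith
    have : 0 < z := hz.1
    apply div_neg_of_neg_of_pos <;> nlinarith [mul_pos this this]
  simpa [secondDerivNumerator_zero] using
    hanti (left_mem_Icc.mpr hs.le) (right_mem_Icc.mpr hs.le) hs
end

section
variable {M x : ℝ}

lemma hasDerivAt_UkM (hx : 0 < x) (hxM : x < M) :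
    HasDerivAt (UkM M) (-(logRatio √M √x / √x)) x := by
  have hsqrt : √M - √x ≠ 0 := (sub_pos.mpr (sqrt_lt_sqrt hx.le hxM)).ne'
  have hderiv := ((hasDerivAt_logSqSubPrimitive_left hsqrt (by positivity)).comp x
    (hasDerivAt_sqrt hx.ne')).const_mul (-2)
  refine (hderiv.congr_deriv ?_).congr_of_eventuallyEq ?_
  · field_simp
  · filter_upwards [Ioi_mem_nhds hx] with y hy
    exact integral_neg_log_abs_sub_div_sqrt hy (hx.trans hxM)

lemma hasDerivAt_deriv_UkM (hx : 0 < x) (hxM : x < M) :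
    HasDerivAt (deriv (UkM M)) (secondDerivNumerator √M √x / √x ^ 3) x := by
  have hsqrt : √M - √x ≠ 0 := (sub_pos.mpr (sqrt_lt_sqrt hx.le hxM)).ne'
  have hderiv := ((hasDerivAt_logRatio_div_self (by positivity) hsqrt
    (sqrt_pos.mpr hx).ne').comp x (hasDerivAt_sqrt hx.ne')).neg
  refine (hderiv.congr_deriv ?_).congr_of_eventuallyEq ?_
  · have := (sqrt_pos.mpr hx).ne'
    field_simp
  · filter_upwards [Ioo_mem_nhds hx hxM] with y hy
    exact (hasDerivAt_UkM hy.1 hy.2).deriv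

lemma deriv_deriv_UkM_neg (hx : 0 < x) (hxM : x < M) : deriv (deriv (UkM M)) x < 0 := by
  rw [(hasDerivAt_deriv_UkM hx hxM).deriv]
  exact div_neg_of_neg_of_pos
    (secondDerivNumerator_neg (sqrt_pos.mpr hx) (sqrt_lt_sqrt hx.le hxM)) (by positivity)

lemma rpow_three_halves_mul_deriv_deriv_UkM (hx : 0 < x) (hxM : x < M) :
    x ^ ((3:ℝ)/2) * deriv (deriv (UkM M)) x = secondDerivNumerator √M √x := by
  have hrpow : x ^ ((3:ℝ)/2) = √x ^ 3 := by
    rw [show (3:ℝ)/2 = 1/2 * 3 by norm_num, rpow_mul hx.le, ← sqrt_eq_rpow]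
    norm_cast
  have := (sqrt_pos.mpr hx).ne'
  rw [(hasDerivAt_deriv_UkM hx hxM).deriv, hrpow]
  field_simp

lemma hasDerivAt_secondDerivNumerator_sqrt (hx : 0 < x) (hxM : x < M) :
    HasDerivAt (fun y => secondDerivNumerator √M √y) (-√(M * x) / (M - x) ^ 2) x := by
  have hsqrt : √M - √x ≠ 0 := (sub_pos.mpr (sqrt_lt_sqrt hx.le hxM)).ne'
  refine ((hasDerivAt_secondDerivNumerator (by positivity) hsqrt).comp x
    (hasDerivAt_sqrt hx.ne')).congr_deriv ?_
  have := (sqrt_pos.mpr hx).ne'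
  have := (sub_pos.mpr hxM).ne'
  rw [sq_sqrt (hx.trans hxM).le, sq_sqrt hx.le, sqrt_mul (hx.trans hxM).le]
  field_simp
  rw [sq_sqrt hx.le]

end

theorem potential_of_kappa_concave (M : ℝ) (hM : 0 < M) :
    ConcaveOn ℝ (Set.Ioo 0 M) (UkM M) ∧
    (∀ x ∈ Set.Ioo (0:ℝ) M, deriv (deriv (UkM M)) x < 0) ∧
    Tendsto (fun x : ℝ => x ^ ((3:ℝ)/2) * deriv (deriv (UkM M)) x)
      (nhdsWithin 0 (Set.Ioi 0)) (nhds 0) ∧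
    ∀ x ∈ Set.Ioo (0:ℝ) M,
      HasDerivAt (fun x : ℝ => x ^ ((3:ℝ)/2) * deriv (deriv (UkM M)) x)
        (-Real.sqrt (M * x) / (M - x) ^ 2) x := by
  refine ⟨?_, fun x hx => deriv_deriv_UkM_neg hx.1 hx.2, ?_, fun x hx => ?_⟩
  · refine (strictConcaveOn_of_deriv2_neg (convex_Ioo 0 M)
      (fun x hx => (hasDerivAt_UkM hx.1 hx.2).continuousAt.continuousWithinAt)
      fun x hx => ?_).concaveOn
    rw [interior_Ioo] at hx
    exact deriv_deriv_UkM_neg hx.1 hx.2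
  · have hcont : ContinuousAt (secondDerivNumerator √M) 0 :=
      (hasDerivAt_secondDerivNumerator (by positivity)
        (by simpa using (sqrt_pos.mpr hM).ne')).continuousAt
    have hsqrt : Tendsto sqrt (nhds 0) (nhds 0) := by simpa using continuous_sqrt.tendsto 0
    have hlim := hcont.tendsto.comp hsqrt
    rw [secondDerivNumerator_zero] at hlim
    refine (hlim.mono_left nhdsWithin_le_nhds).congr' ?_
    filter_upwards [Ioo_mem_nhdsGT hM] with x hx
    exact (rpow_three_halves_mul_deriv_deriv_UkM hx.1 hx.2).symm
  · exact (hasDerivAt_secondDerivNumerator_sqrt hx.1 hx.2).congr_of_eventuallyEq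
      (eventually_of_mem (Ioo_mem_nhds hx.1 hx.2) fun y hy =>
        rpow_three_halves_mul_deriv_deriv_UkM hy.1 hy.2)
end
end

section
/- Let 0 < a < b and let w(x) = |x|/(π√((b²−x²)(x²−a²))) for x ∈ J(a,b) = [−b,−a] ∪ [a,b] and w(x) = 0 otherwise. Then ∫_ℝ w(x) dx = 1, ∫_ℝ x² w(x) dx = (a²+b²)/2, and for every real z with z > b, one has ∫_{J(a,b)} w(x)/(z−x) dx = z/√((z²−a²)(z²−b²)). -/
open MeasureTheory Real Filter Set

noncomputable section

/-- The set `J(a,b) = [−b,−a] ∪ [a,b]`. -/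
def Jset (a b : ℝ) : Set ℝ := Set.Icc (-b) (-a) ∪ Set.Icc a b

/-- The density of the equilibrium measure of `J(a,b)`:
`w(x) = |x|/(π√((b²−x²)(x²−a²)))` on `J(a,b)` and `0` elsewhere. -/
def eqDensity (a b : ℝ) : ℝ → ℝ :=
  (Jset a b).indicator fun x => |x| / (π * Real.sqrt ((b ^ 2 - x ^ 2) * (x ^ 2 - a ^ 2)))

/-!
Symmetrising the test function reduces every integral against `w` to one over `[a, b]`, and
the substitution `u = x²` turns `w(x) dx` there into `du / (2π √((b² - u)(u - a²)))`, the
arcsine weight of `[α, β] = [a², b²]`.  Its mass, first moment and Stieltjes transform at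
`ζ = z²` have elementary primitives: `arcsin` of the affine map sending `α, β` to `-1, 1`
(together with `√((β - u)(u - α))` for the moment), and `arcsin` of the Möbius map sending
`α, β, ζ` to `-1, 1, ∞`.
-/

lemma hasDerivAt_arcsin_comp_of_one_sub_sq_eq {s : ℝ → ℝ} {s' r u : ℝ}
    (hs : HasDerivAt s s' u) (hr : 0 < r) (hsr : 1 - s u ^ 2 = r ^ 2) :
    HasDerivAt (fun t => arcsin (s t)) (s' / r) u := by
  have hlt : s u ^ 2 < 1 := by nlinarith [pow_pos hr 2]
  have h := (hasDerivAt_arcsin (x := s u) (by intro h; simp [h] at hlt)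
    (by intro h; simp [h] at hlt)).comp u hs
  rwa [hsr, sqrt_sq hr.le, one_div_mul_eq_div] at h

section ArcsineIntegrals

variable {α β : ℝ}

lemma sub_mul_sub_pos_of_mem_Ioo {u : ℝ} (hu : u ∈ Ioo α β) : 0 < (β - u) * (u - α) :=
  mul_pos (sub_pos.2 hu.2) (sub_pos.2 hu.1)

lemma hasDerivAt_arcsin_affine {u : ℝ} (hu : u ∈ Ioo α β) :
    HasDerivAt (fun t => arcsin ((2 * t - α - β) / (β - α)))
      (1 / √((β - u) * (u - α))) u := by
  have hβα : 0 < β - α := sub_pos.2 (hu.1.trans hu.2)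
  have hP := sub_mul_sub_pos_of_mem_Ioo hu
  have hs : HasDerivAt (fun t => (2 * t - α - β) / (β - α)) (2 / (β - α)) u :=
    ((((hasDerivAt_id' u).const_mul 2).sub_const α).sub_const β).div_const (β - α)
      |>.congr_deriv (by ring)
  refine (hasDerivAt_arcsin_comp_of_one_sub_sq_eq hs
    (r := 2 * √((β - u) * (u - α)) / (β - α)) (by positivity) ?_).congr_deriv ?_
  · simp only [div_pow, mul_pow, sq_sqrt hP.le]
    field_simp
    ring
  · field_simp

lemma hasDerivAt_arcsine_moment_primitive {u : ℝ} (hu : u ∈ Ioo α β) :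
    HasDerivAt
      (fun t => (α + β) / 2 * arcsin ((2 * t - α - β) / (β - α)) - √((β - t) * (t - α)))
      (u / √((β - u) * (u - α))) u := by
  have hP := sub_mul_sub_pos_of_mem_Ioo hu
  have hq : HasDerivAt (fun t => (β - t) * (t - α)) (α + β - 2 * u) u :=
    (((hasDerivAt_id' u).const_sub β).fun_mul ((hasDerivAt_id' u).sub_const α)).congr_deriv
      (by ring)
  refine (((hasDerivAt_arcsin_affine hu).const_mul ((α + β) / 2)).fun_sub
    (hq.sqrt hP.ne')).congr_deriv ?_
  field_simp
  ring

lemma hasDerivAt_arcsin_mobius {ζ u : ℝ} (hζ : β < ζ) (hu : u ∈ Ioo α β) :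
    HasDerivAt
      (fun t =>
        arcsin (1 - 2 * (ζ - α) * (β - t) / ((β - α) * (ζ - t))) / √((ζ - α) * (ζ - β)))
      ((ζ - u)⁻¹ / √((β - u) * (u - α))) u := by
  have hβα : 0 < β - α := sub_pos.2 (hu.1.trans hu.2)
  have hζu : 0 < ζ - u := by linarith [hu.2]
  have hQ : 0 < (ζ - α) * (ζ - β) := mul_pos (by linarith [hu.1, hu.2]) (sub_pos.2 hζ)
  have hP := sub_mul_sub_pos_of_mem_Ioo hu
  have hs : HasDerivAt (fun t => 1 - 2 * (ζ - α) * (β - t) / ((β - α) * (ζ - t)))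
      (2 * ((ζ - α) * (ζ - β)) / ((β - α) * (ζ - u) ^ 2)) u := by
    refine ((((hasDerivAt_id' u).const_sub β).const_mul (2 * (ζ - α))).fun_div
      (((hasDerivAt_id' u).const_sub ζ).const_mul (β - α)) (by positivity)).const_sub 1
      |>.congr_deriv ?_
    field_simp
    ring
  refine (hasDerivAt_arcsin_comp_of_one_sub_sq_eq hs
    (r := 2 * √((ζ - α) * (ζ - β)) * √((β - u) * (u - α)) / ((β - α) * (ζ - u)))
    (by positivity) ?_).div_const (√((ζ - α) * (ζ - β))) |>.congr_deriv ?_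
  · simp only [div_pow, mul_pow, sq_sqrt hP.le, sq_sqrt hQ.le]
    field_simp
    ring
  · have hR := sq_sqrt hQ.le
    field_simp
    exact hR.symm

lemma intervalIntegrable_arcsine_weight (hαβ : α ≤ β) :
    IntervalIntegrable (fun u => 1 / √((β - u) * (u - α))) volume α β := by
  refine intervalIntegral.intervalIntegrable_deriv_of_nonneg
    (g := fun t => arcsin ((2 * t - α - β) / (β - α))) (by fun_prop) ?_ ?_ <;>
    rw [min_eq_left hαβ, max_eq_right hαβ]
  · exact fun u hu => hasDerivAt_arcsin_affine hu
  · intro u _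
    positivity

lemma integral_arcsine_weight (hαβ : α < β) :
    ∫ u in α..β, 1 / √((β - u) * (u - α)) = π := by
  have hβα : β - α ≠ 0 := (sub_pos.2 hαβ).ne'
  rw [intervalIntegral.integral_eq_sub_of_hasDerivAt_of_le hαβ.le (by fun_prop)
    (fun u hu => hasDerivAt_arcsin_affine hu) (intervalIntegrable_arcsine_weight hαβ.le),
    show (2 * β - α - β) / (β - α) = 1 by field_simp; ring,
    show (2 * α - α - β) / (β - α) = -1 by field_simp; ring, arcsin_one, arcsin_neg_one]
  ring

lemma integral_arcsine_weight_moment (hαβ : α < β) :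
    ∫ u in α..β, u / √((β - u) * (u - α)) = π * (α + β) / 2 := by
  have hβα : β - α ≠ 0 := (sub_pos.2 hαβ).ne'
  have hint : IntervalIntegrable (fun u => u / √((β - u) * (u - α))) volume α β := by
    simpa only [mul_one_div] using
      (intervalIntegrable_arcsine_weight hαβ.le).continuousOn_mul (continuousOn_id' _)
  rw [intervalIntegral.integral_eq_sub_of_hasDerivAt_of_le hαβ.le (by fun_prop)
    (fun u hu => hasDerivAt_arcsine_moment_primitive hu) hint,
    show (2 * β - α - β) / (β - α) = 1 by field_simp; ring,
    show (2 * α - α - β) / (β - α) = -1 by field_simp; ring, arcsin_one, arcsin_neg_one]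
  simp only [sub_self, zero_mul, mul_zero, sqrt_zero]
  ring

lemma integral_arcsine_weight_stieltjes {ζ : ℝ} (hαβ : α < β) (hζ : β < ζ) :
    ∫ u in α..β, (ζ - u)⁻¹ / √((β - u) * (u - α))
      = π / √((ζ - α) * (ζ - β)) := by
  have hβα : β - α ≠ 0 := (sub_pos.2 hαβ).ne'
  have hζα : ζ - α ≠ 0 := (sub_pos.2 (hαβ.trans hζ)).ne'
  have hζu : ∀ u ∈ uIcc α β, ζ - u ≠ 0 := fun u hu =>
    (sub_pos.2 ((uIcc_of_le hαβ.le ▸ hu).2.trans_lt hζ)).ne'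
  have hint :
      IntervalIntegrable (fun u => (ζ - u)⁻¹ / √((β - u) * (u - α))) volume α β := by
    simpa only [mul_one_div] using
      (intervalIntegrable_arcsine_weight hαβ.le).continuousOn_mul
        (g := fun u => (ζ - u)⁻¹) (ContinuousOn.inv₀ (by fun_prop) hζu)
  have hcont : ContinuousOn (fun t =>
      arcsin (1 - 2 * (ζ - α) * (β - t) / ((β - α) * (ζ - t))) / √((ζ - α) * (ζ - β)))
      (Icc α β) := by
    refine (continuous_arcsin.comp_continuousOn ?_).div_const _
    exact continuousOn_const.sub (ContinuousOn.div (by fun_prop) (by fun_prop)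
      fun t ht => mul_ne_zero hβα (hζu t (uIcc_of_le hαβ.le ▸ ht)))
  rw [intervalIntegral.integral_eq_sub_of_hasDerivAt_of_le hαβ.le hcont
    (fun u hu => hasDerivAt_arcsin_mobius hζ hu) hint,
    show 1 - 2 * (ζ - α) * (β - β) / ((β - α) * (ζ - β)) = 1 by simp,
    show 1 - 2 * (ζ - α) * (β - α) / ((β - α) * (ζ - α)) = -1 by field_simp; ring,
    arcsin_one, arcsin_neg_one]
  ring

end ArcsineIntegrals

section ChangeOfVariables

variable {a b : ℝ}

lemma image_sq_Icc (ha : 0 ≤ a) (hab : a ≤ b) :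
    (fun x : ℝ => x ^ 2) '' Icc a b = Icc (a ^ 2) (b ^ 2) :=
  (continuous_pow 2).continuousOn.image_Icc_of_monotoneOn hab
    fun _ hx _ _ hxy => pow_le_pow_left₀ (ha.trans hx.1) hxy 2

lemma hasDerivWithinAt_sq (s : Set ℝ) (x : ℝ) :
    HasDerivWithinAt (fun x : ℝ => x ^ 2) (2 * x) s x :=
  (hasDerivAt_pow 2 x).hasDerivWithinAt.congr_deriv (by ring)

lemma injOn_sq_Icc (ha : 0 ≤ a) : InjOn (fun x : ℝ => x ^ 2) (Icc a b) :=
  (pow_left_strictMonoOn₀ two_ne_zero).injOn.mono fun _ hx => ha.trans hx.1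

lemma integral_Icc_comp_sq (ha : 0 ≤ a) (hab : a ≤ b) (G : ℝ → ℝ) :
    ∫ x in Icc a b, 2 * x * G (x ^ 2) = ∫ u in Icc (a ^ 2) (b ^ 2), G u := by
  rw [← image_sq_Icc ha hab, integral_image_eq_integral_abs_deriv_smul measurableSet_Icc
    (fun _ _ => hasDerivWithinAt_sq _ _) (injOn_sq_Icc ha)]
  refine setIntegral_congr_fun measurableSet_Icc fun x hx => ?_
  rw [abs_of_nonneg (by linarith [ha.trans hx.1]), smul_eq_mul]

lemma integrableOn_Icc_comp_sq_iff (ha : 0 ≤ a) (hab : a ≤ b) (G : ℝ → ℝ) :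
    IntegrableOn (fun x => 2 * x * G (x ^ 2)) (Icc a b) ↔
      IntegrableOn G (Icc (a ^ 2) (b ^ 2)) := by
  rw [← image_sq_Icc ha hab, integrableOn_image_iff_integrableOn_abs_deriv_smul measurableSet_Icc
    (fun _ _ => hasDerivWithinAt_sq _ _) (injOn_sq_Icc ha)]
  refine integrableOn_congr_fun (fun x hx => ?_) measurableSet_Icc
  rw [abs_of_nonneg (by linarith [ha.trans hx.1]), smul_eq_mul]

end ChangeOfVariables

section TwoIntervals

variable {a b : ℝ}

lemma neg_mem_Jset_iff {x : ℝ} : -x ∈ Jset a b ↔ x ∈ Jset a b := by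
  simp only [Jset, mem_union, mem_Icc, neg_le_neg_iff, le_neg, neg_le]
  tauto

lemma eqDensity_neg (x : ℝ) : eqDensity a b (-x) = eqDensity a b x := by
  by_cases hx : x ∈ Jset a b
  · rw [eqDensity, indicator_of_mem hx, indicator_of_mem (neg_mem_Jset_iff.2 hx), abs_neg, neg_sq]
  · rw [eqDensity, indicator_of_notMem hx, indicator_of_notMem (mt neg_mem_Jset_iff.1 hx)]

lemma eqDensity_of_mem_Icc (ha : 0 ≤ a) {x : ℝ} (hx : x ∈ Icc a b) :
    eqDensity a b x = x / (π * √((b ^ 2 - x ^ 2) * (x ^ 2 - a ^ 2))) := by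
  rw [eqDensity, indicator_of_mem (show x ∈ Jset a b from Or.inr hx),
    abs_of_nonneg (ha.trans hx.1)]

lemma isCompact_Jset : IsCompact (Jset a b) := isCompact_Icc.union isCompact_Icc

lemma integrableOn_Icc_neg_iff {f : ℝ → ℝ} :
    IntegrableOn f (Icc (-b) (-a)) ↔ IntegrableOn (fun x => f (-x)) (Icc a b) := by
  rw [← (Measure.measurePreserving_neg volume).integrableOn_comp_preimage measurableEmbedding_neg]
  simp [Function.comp_def]

lemma integrableOn_eqDensity (ha : 0 ≤ a) (hab : a ≤ b) :
    IntegrableOn (eqDensity a b) (Jset a b) := by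
  have hsq : a ^ 2 ≤ b ^ 2 := pow_le_pow_left₀ ha hab 2
  have hpos : IntegrableOn (eqDensity a b) (Icc a b) := by
    refine ((integrableOn_Icc_comp_sq_iff ha hab
      (fun u => 1 / √((b ^ 2 - u) * (u - a ^ 2)) / (2 * π))).2 ?_).congr_fun
      (fun x hx => ?_) measurableSet_Icc
    · exact ((intervalIntegrable_iff_integrableOn_Icc_of_le hsq).1
        (intervalIntegrable_arcsine_weight hsq)).div_const _
    · rw [eqDensity_of_mem_Icc ha hx]
      field_simp
  have hneg : IntegrableOn (eqDensity a b) (Icc (-b) (-a)) := by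
    simpa only [integrableOn_Icc_neg_iff, eqDensity_neg] using hpos
  exact hneg.union hpos

lemma setIntegral_Jset_eq_setIntegral_Icc (ha : 0 < a) {f : ℝ → ℝ}
    (hf : IntegrableOn f (Jset a b)) :
    ∫ x in Jset a b, f x = ∫ x in Icc a b, (f x + f (-x)) := by
  have hdisj : Disjoint (Icc (-b) (-a)) (Icc a b) := by
    rw [Set.disjoint_left]
    rintro x ⟨-, hx⟩ ⟨hx', -⟩
    linarith
  have hneg := hf.mono_set (subset_union_left (t := Icc a b))
  have hpos := hf.mono_set (subset_union_right (s := Icc (-b) (-a)))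
  have hreflect : ∫ x in Icc (-b) (-a), f x = ∫ x in Icc a b, f (-x) := by
    rw [← (Measure.measurePreserving_neg volume).setIntegral_preimage_emb measurableEmbedding_neg]
    simp
  rw [Jset, setIntegral_union hdisj measurableSet_Icc hneg hpos, hreflect,
    integral_add hpos (integrableOn_Icc_neg_iff.1 hneg), add_comm]

theorem integral_mul_eqDensity (ha : 0 < a) (hab : a ≤ b) {g h : ℝ → ℝ}
    (hg : ContinuousOn g (Jset a b)) (hgh : ∀ x ∈ Icc a b, g x + g (-x) = 2 * h (x ^ 2)) :
    ∫ x, g x * eqDensity a b x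
      = (∫ u in a ^ 2..b ^ 2, h u / √((b ^ 2 - u) * (u - a ^ 2))) / π := by
  have hint := (integrableOn_eqDensity ha.le hab).continuousOn_mul hg isCompact_Jset
  rw [← setIntegral_eq_integral_of_forall_compl_eq_zero (s := Jset a b)
    fun x hx => by simp [eqDensity, hx], setIntegral_Jset_eq_setIntegral_Icc ha hint]
  calc ∫ x in Icc a b, (g x * eqDensity a b x + g (-x) * eqDensity a b (-x))
      = ∫ x in Icc a b, 2 * x * (h (x ^ 2) / √((b ^ 2 - x ^ 2) * (x ^ 2 - a ^ 2)) / π) :=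
        setIntegral_congr_fun measurableSet_Icc fun x hx => by
          rw [eqDensity_neg, ← add_mul, hgh x hx, eqDensity_of_mem_Icc ha.le hx]
          field_simp
    _ = ∫ u in Icc (a ^ 2) (b ^ 2), h u / √((b ^ 2 - u) * (u - a ^ 2)) / π :=
        integral_Icc_comp_sq ha.le hab fun u => h u / √((b ^ 2 - u) * (u - a ^ 2)) / π
    _ = _ := by
      rw [integral_div, intervalIntegral.integral_of_le (pow_le_pow_left₀ ha.le hab 2),
        integral_Icc_eq_integral_Ioc]

end TwoIntervals

lemma inv_sub_add_inv_sub_neg {z x : ℝ} (hsub : z - x ≠ 0) (hadd : z + x ≠ 0) :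
    (z - x)⁻¹ + (z - -x)⁻¹ = 2 * (z * (z ^ 2 - x ^ 2)⁻¹) := by
  have hsq : z ^ 2 - x ^ 2 ≠ 0 := by
    rw [sq_sub_sq]
    exact mul_ne_zero hadd hsub
  rw [sub_neg_eq_add]
  field_simp
  ring

theorem equilibrium_measure_of_two_intervals (a b : ℝ) (ha : 0 < a) (hab : a < b) :
    (∫ x, eqDensity a b x) = 1 ∧
    (∫ x, x ^ 2 * eqDensity a b x) = (a ^ 2 + b ^ 2) / 2 ∧
    ∀ z : ℝ, b < z →
      (∫ x, eqDensity a b x / (z - x))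
        = z / Real.sqrt ((z ^ 2 - a ^ 2) * (z ^ 2 - b ^ 2)) := by
  have hsq : a ^ 2 < b ^ 2 := pow_lt_pow_left₀ hab ha.le two_ne_zero
  refine ⟨?_, ?_, fun z hz => ?_⟩
  · have h := integral_mul_eqDensity ha hab.le (g := fun _ => 1) (h := fun _ => 1)
      continuousOn_const fun _ _ => by norm_num
    simp only [one_mul] at h
    rw [h, integral_arcsine_weight hsq, div_self pi_ne_zero]
  · rw [integral_mul_eqDensity ha hab.le (h := fun u => u) (by fun_prop) fun _ _ => by ring,
      integral_arcsine_weight_moment hsq]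
    field_simp
  · have hzx : ∀ x ∈ Jset a b, z - x ≠ 0 := by
      rintro x (hx | hx) <;> linarith [hx.2]
    simp_rw [div_eq_inv_mul (eqDensity a b _)]
    rw [integral_mul_eqDensity ha hab.le (g := fun x => (z - x)⁻¹)
      (h := fun u => z * (z ^ 2 - u)⁻¹) (ContinuousOn.inv₀ (by fun_prop) hzx)
      fun x hx => inv_sub_add_inv_sub_neg (by linarith [hx.2]) (by linarith [ha.trans_le hx.1])]
    simp_rw [mul_div_assoc]
    rw [intervalIntegral.integral_const_mul,
      integral_arcsine_weight_stieltjes hsq (pow_lt_pow_left₀ hz (ha.trans hab).le two_ne_zero)]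
    field_simp
end
end
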